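/- arXiv:2205.09404 — 6 statements merged into one kernel-verified Lean document; each statement's English description precedes it below -/
import Mathlib

section
/- If a DFA with two input letters a, b in which b acts as a permutation of the state set Q is completely reachable, then b acts as a cyclic permutation of Q (i.e., the cyclic group generated by b acts transitively on Q). -/
/-!
If `a` is a permutation too, every word permutes `Q`, so no proper subset is reachable and `Q`
is a single state. Otherwise some state `e` is missed by `a`. Tracing a word `w` with
`Q·w = Q \ {q}` letter by letter, the missing state is created by the last `a` (where it must be
`e`) and afterwards only moved by `b`; hence every `q` lies in the forward `b`-orbit of `e`, and
`b` is a single cycle.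
-/

open Function Set

section wordMap

variable {Q : Type*}

def wordMap (a b : Q → Q) (w : List Bool) : Q → Q :=
  fun q => w.foldl (fun q' c => if c then b q' else a q') q

variable {a b : Q → Q}

@[simp]
theorem wordMap_nil : wordMap a b [] = id := rfl

theorem wordMap_append_singleton (w : List Bool) (c : Bool) :
    wordMap a b (w ++ [c]) = (if c then b else a) ∘ wordMap a b w := by
  funext q
  cases c <;> simp [wordMap]

theorem surjective_wordMap (ha : Surjective a) (hb : Surjective b) (w : List Bool) :
    Surjective (wordMap a b w) := by
  induction w using List.reverseRecOn with
  | nil => exact surjective_id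
  | append_singleton w c ih =>
    rw [wordMap_append_singleton]
    cases c
    · exact ha.comp ih
    · exact hb.comp ih

theorem exists_eq_compl_singleton_of_image_eq (hb : Bijective b) {R : Set Q} {q : Q}
    (h : b '' R = {q}ᶜ) : ∃ x, b x = q ∧ R = {x}ᶜ := by
  obtain ⟨x, rfl⟩ := hb.2 q
  refine ⟨x, rfl, ?_⟩
  rw [← hb.1.preimage_image R, h]
  ext y
  simp [hb.1.eq_iff]

theorem exists_iterate_eq_of_range_wordMap_eq_compl_singleton (hb : Bijective b) {e : Q}
    (he : e ∉ range a) {w : List Bool} {q : Q} (hw : range (wordMap a b w) = {q}ᶜ) :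
    ∃ k, b^[k] e = q := by
  induction w using List.reverseRecOn generalizing q with
  | nil =>
    rw [wordMap_nil, range_id] at hw
    exact absurd (hw ▸ mem_univ q) (notMem_compl_iff.2 rfl)
  | append_singleton w c ih =>
    rw [wordMap_append_singleton, range_comp] at hw
    cases c
    · simp only [Bool.false_eq_true, if_false] at hw
      refine ⟨0, by_contra fun hqe => he ?_⟩
      have he_mem : e ∈ a '' range (wordMap a b w) := hw ▸ hqe
      exact image_subset_range _ _ he_mem
    · obtain ⟨x, rfl, hx⟩ := exists_eq_compl_singleton_of_image_eq hb hw
      obtain ⟨k, rfl⟩ := ih hx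
      exact ⟨k + 1, iterate_succ_apply' b k e⟩

end wordMap

theorem exists_iterate_eq_of_forall_iterate_eq {Q : Type*} [Finite Q] {b : Q → Q}
    (hb : Bijective b) (e : Q) (he : ∀ q, ∃ k, b^[k] e = q) (p q : Q) : ∃ k, b^[k] p = q := by
  let σ : Equiv.Perm Q := Equiv.ofBijective b hb
  have hσ : ∀ q, σ.SameCycle e q := fun q => by
    obtain ⟨k, hk⟩ := he q
    exact ⟨k, by simpa [σ, Equiv.Perm.coe_pow] using hk⟩
  obtain ⟨k, hk⟩ := ((hσ p).symm.trans (hσ q)).exists_nat_pow_eq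
  exact ⟨k, by simpa [σ, Equiv.Perm.coe_pow] using hk⟩

theorem cyclic_of_completely_reachable {Q : Type*} [Fintype Q] (a b : Q → Q)
    (hb : Function.Bijective b)
    (hcr : ∀ S : Set Q, S.Nonempty → ∃ w : List Bool,
      Set.range (fun q => w.foldl (fun q' c => if c then b q' else a q') q) = S) :
    ∀ p q : Q, ∃ k : ℕ, b^[k] p = q := by
  by_cases ha : Surjective a
  · intro p q
    obtain ⟨w, hw⟩ := hcr {p} ⟨p, rfl⟩
    have hq : q ∈ ({p} : Set Q) := hw ▸ (surjective_wordMap ha hb.2 w).range_eq ▸ mem_univ q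
    exact ⟨0, (mem_singleton_iff.1 hq).symm⟩
  obtain ⟨e, he⟩ : ∃ e, e ∉ range a := by simpa [Surjective] using ha
  refine exists_iterate_eq_of_forall_iterate_eq hb e fun q => ?_
  rcases ({q}ᶜ : Set Q).eq_empty_or_nonempty with hq | hq
  · have he_mem : e ∈ ({q} : Set Q) := compl_empty_iff.1 hq ▸ mem_univ e
    exact ⟨0, he_mem⟩
  · obtain ⟨w, hw⟩ := hcr _ hq
    exact exists_iterate_eq_of_range_wordMap_eq_compl_singleton hb he hw
end

section
/- Let ⟨Z_n, {a,b}⟩ be a standardized DFA (a has defect 1 with excluded state 0 and 0·a = dupl(a); b acts as q ↦ q+1 mod n). If the DFA is completely reachable, then no proper subgroup of (Z_n, +) is invariant under the action of a. -/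
/-- Action of a letter: `true` is `b : q ↦ q+1`, `false` is `a`. -/
def act {n : ℕ} (a : ZMod n → ZMod n) (q : ZMod n) (c : Bool) : ZMod n :=
  if c then q + 1 else a q

/-- Action of a word on a state. -/
def wact {n : ℕ} (a : ZMod n → ZMod n) (w : List Bool) (q : ZMod n) : ZMod n :=
  w.foldl (act a) q

/-- Excluded set of a word. -/
def excl {n : ℕ} (a : ZMod n → ZMod n) (w : List Bool) : Set (ZMod n) :=
  {q | ∀ p, wact a w p ≠ q}

/-- Duplicate set of a word. -/
def dupl {n : ℕ} (a : ZMod n → ZMod n) (w : List Bool) : Set (ZMod n) :=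
  {p | ∃ q₁ q₂, q₁ ≠ q₂ ∧ wact a w q₁ = p ∧ wact a w q₂ = p}

/-- Complete reachability for a standardized binary DFA on `ZMod n`. -/
def CompletelyReachable {n : ℕ} (a : ZMod n → ZMod n) : Prop :=
  ∀ S : Set (ZMod n), S.Nonempty → ∃ w : List Bool, Set.range (wact a w) = S

/-- Standardized DFA: `a` has defect 1 with excluded state `0`, and `0·a = dupl(a)`,
i.e. `a 0` has a second preimage `r ≠ 0`. -/
def Standardized {n : ℕ} (a : ZMod n → ZMod n) : Prop :=
  Set.range a = {(0 : ZMod n)}ᶜ ∧ ∃ r : ZMod n, r ≠ 0 ∧ a r = a 0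

/-- Edge of the Rystsov graph: for some word of defect 1, `q` is the excluded state
and `p` the duplicate state. -/
def RysEdge {n : ℕ} (a : ZMod n → ZMod n) (q p : ZMod n) : Prop :=
  ∃ w : List Bool, excl a w = {q} ∧ dupl a w = {p}

/-- The difference set `D₁`. -/
def D1 {n : ℕ} (a : ZMod n → ZMod n) : Set (ZMod n) :=
  {p | RysEdge a 0 p}

/-!
Write `π : ℤ/n → ℤ/n ⧸ H`. The complements `π⁻¹' {c}ᶜ` of cosets of `H` form a family that
contains `Hᶜ ≠ ∅` but not `ℤ/n`, and that is closed under preimages of letters: if `S·x` is in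
it, so is `S`. For `b` this is a translation. For `a`, since `0` is not in the image of `a`, the
only candidate is `S·a = Hᶜ`; as `a` maps `H` into `H` and `Hᶜ` injectively into `Hᶜ`, `S = Hᶜ`.
That last fact comes from counting: `a` is injective off the second preimage `r` of `a 0`; it
maps the finite set `H` into `H \ {0}`, so it is not injective on `H` and `r ∈ H`; hence it maps
`H \ {r}` onto `H \ {0}`, so that `a⁻¹' H = H`.
-/

open Set

section DefectOne

variable {α : Type*} {f : α → α} {s S : Set α} {r x y z : α}

lemma injOn_compl_singleton_of_range_eq [Finite α] (hf : range f = {z}ᶜ) (hxy : x ≠ y)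
    (h : f x = f y) : InjOn f {x}ᶜ := by
  refine injOn_of_ncard_image_eq ?_
  have himage : f '' {x}ᶜ = range f := by
    refine (image_subset_range _ _).antisymm ?_
    rintro _ ⟨t, rfl⟩
    by_cases ht : t = x
    · exact ⟨y, hxy.symm, by rw [ht, h]⟩
    · exact ⟨t, ht, rfl⟩
  rw [himage, hf, ncard_compl, ncard_compl, ncard_singleton, ncard_singleton]

lemma mem_of_mapsTo_of_injOn_compl_singleton [Finite α] (hs : MapsTo f s s) (hz : z ∈ s)
    (hzf : z ∉ range f) (hinj : InjOn f {r}ᶜ) : r ∈ s := by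
  by_contra hr
  have hbij := ((toFinite s).injOn_iff_bijOn_of_mapsTo hs).mp
    (hinj.mono (subset_compl_singleton_iff.mpr hr))
  obtain ⟨t, -, ht⟩ := hbij.surjOn hz
  exact hzf ⟨t, ht⟩

lemma mapsTo_compl_of_injOn_compl_singleton [Finite α] (hs : MapsTo f s s) (hz : z ∈ s)
    (hzf : z ∉ range f) (hr : r ∈ s) (hinj : InjOn f {r}ᶜ) : MapsTo f sᶜ sᶜ := by
  have hinj' : InjOn f (s \ {r}) := hinj.mono (sdiff_subset_compl s {r})
  have hsurj : SurjOn f (s \ {r}) (s \ {z}) := by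
    have hmaps : MapsTo f (s \ {r}) (s \ {z}) := fun x hx => ⟨hs hx.1, fun h => hzf ⟨x, h⟩⟩
    refine (eq_of_subset_of_ncard_le hmaps.image_subset ?_).symm.subset
    rw [hinj'.ncard_image, ncard_sdiff_singleton_of_mem hr, ncard_sdiff_singleton_of_mem hz]
  intro x hx hfx
  obtain ⟨t, ht, hft⟩ := hsurj ⟨hfx, fun h => hzf ⟨x, h⟩⟩
  have hxr : x ∈ ({r}ᶜ : Set α) := fun h => hx (mem_singleton_iff.mp h ▸ hr)
  exact hx (hinj ht.2 hxr hft ▸ ht.1)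

lemma eq_compl_of_image_eq_compl (hs : MapsTo f s s) (hsc : MapsTo f sᶜ sᶜ) (hinj : InjOn f sᶜ)
    (h : f '' S = sᶜ) : S = sᶜ := by
  have hS : S ⊆ sᶜ := fun x hx hxs => (h ▸ mem_image_of_mem f hx) (hs hxs)
  refine hS.antisymm ((hinj.image_subset_image_iff subset_rfl hS).mp ?_)
  rw [h]
  exact hsc.image_subset

end DefectOne

section Cosets

variable {G : Type*} [AddCommGroup G] {H : AddSubgroup G} {S : Set G} {c : G ⧸ H}

lemma preimage_mk_compl_zero : QuotientAddGroup.mk ⁻¹' ({0}ᶜ : Set (G ⧸ H)) = (H : Set G)ᶜ := by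
  ext x
  simp [QuotientAddGroup.eq_zero_iff]

lemma eq_preimage_mk_compl_of_image_add {g : G}
    (h : (· + g) '' S = QuotientAddGroup.mk ⁻¹' {c}ᶜ) :
    S = QuotientAddGroup.mk ⁻¹' {c - g}ᶜ := by
  rw [← preimage_image_eq S (add_left_injective g), h]
  ext x
  simp [eq_sub_iff_add_eq]

lemma eq_preimage_mk_compl_zero_of_image_eq {f : G → G} (h0 : 0 ∉ range f)
    (hH : MapsTo f H H) (hHc : MapsTo f (H : Set G)ᶜ (H : Set G)ᶜ) (hinj : InjOn f (H : Set G)ᶜ)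
    (h : f '' S = QuotientAddGroup.mk ⁻¹' {c}ᶜ) :
    S = QuotientAddGroup.mk ⁻¹' ({0}ᶜ : Set (G ⧸ H)) := by
  obtain rfl : c = 0 := by
    have h0S : (0 : G) ∉ f '' S := fun h0S => h0 (image_subset_range f S h0S)
    rw [h] at h0S
    simpa [eq_comm] using h0S
  rw [preimage_mk_compl_zero] at h ⊢
  exact eq_compl_of_image_eq_compl hH hHc hinj h

end Cosets

section Words

variable {n : ℕ} (a : ZMod n → ZMod n)

lemma range_wact_append_singleton (w : List Bool) (c : Bool) :
    range (wact a (w ++ [c])) = (fun q => act a q c) '' range (wact a w) := by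
  have hsplit : wact a (w ++ [c]) = (fun q => act a q c) ∘ wact a w :=
    funext fun q => by simp [wact]
  rw [hsplit, range_comp]

lemma range_wact_notMem {F : Set (Set (ZMod n))} (huniv : univ ∉ F)
    (hstep : ∀ c S, (fun q => act a q c) '' S ∈ F → S ∈ F) (w : List Bool) :
    range (wact a w) ∉ F := by
  induction w using List.reverseRecOn with
  | nil => rwa [show wact a [] = id from rfl, range_id]
  | append_singleton w c ih =>
    rw [range_wact_append_singleton]
    exact fun h => ih (hstep c _ h)

end Words

theorem range_wact_ne_compl {n : ℕ} [NeZero n] {a : ZMod n → ZMod n} (hstd : Standardized a)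
    {H : AddSubgroup (ZMod n)} (hinv : MapsTo a H H) (w : List Bool) :
    range (wact a w) ≠ (H : Set (ZMod n))ᶜ := by
  obtain ⟨hrange, r, hr0, har⟩ := hstd
  have h0 : (0 : ZMod n) ∉ range a := by simp [hrange]
  have hinj : InjOn a {r}ᶜ := injOn_compl_singleton_of_range_eq hrange hr0 har
  have hr : r ∈ H := mem_of_mapsTo_of_injOn_compl_singleton hinv H.zero_mem h0 hinj
  have hinvc := mapsTo_compl_of_injOn_compl_singleton hinv H.zero_mem h0 hr hinj
  have hinjc : InjOn a (H : Set (ZMod n))ᶜ :=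
    hinj.mono (compl_subset_compl.mpr (singleton_subset_iff.mpr hr))
  refine fun hw => range_wact_notMem a
    (F := range fun c : ZMod n ⧸ H => QuotientAddGroup.mk ⁻¹' {c}ᶜ) ?_ ?_ w
    (hw ▸ ⟨0, preimage_mk_compl_zero⟩)
  · rintro ⟨c, hc⟩
    obtain ⟨x, rfl⟩ := QuotientAddGroup.mk_surjective c
    simpa using congrArg (x ∈ ·) hc
  · rintro (_ | _) S ⟨c, hc⟩
    · exact ⟨0, (eq_preimage_mk_compl_zero_of_image_eq h0 hinv hinvc hinjc hc.symm).symm⟩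
    · exact ⟨c - (1 : ZMod n), (eq_preimage_mk_compl_of_image_add hc.symm).symm⟩

theorem no_proper_invariant_subgroup {n : ℕ} (hn : 2 ≤ n) (a : ZMod n → ZMod n)
    (hstd : Standardized a) (hcr : CompletelyReachable a) :
    ∀ H : AddSubgroup (ZMod n), (∀ h ∈ H, a h ∈ H) → H = ⊤ := by
  intro H hinv
  have : NeZero n := ⟨by omega⟩
  by_contra hne
  obtain ⟨w, hw⟩ := hcr _ (nonempty_compl.mpr ((AddSubgroup.coe_eq_univ).not.mpr hne))
  exact range_wact_ne_compl hstd hinv w hw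
end

section
/- Let ⟨Z_n,{a,b}⟩ be a standardized DFA. A pair (q,p) ∈ Z_n × Z_n is an edge of the Rystsov graph Γ₁ if and only if p − q belongs to the difference set D₁ = {p ∈ Z_n | (0,p) is an edge of Γ₁}. -/
lemma wact_append {n : ℕ} (a : ZMod n → ZMod n) (w v : List Bool) (q : ZMod n) :
    wact a (w ++ v) q = wact a v (wact a w q) := by
  simp [wact, List.foldl_append]

lemma wact_replicate {n : ℕ} (a : ZMod n → ZMod n) (k : ℕ) (q : ZMod n) :
    wact a (List.replicate k true) q = q + k := by
  induction k generalizing q with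
  | zero => simp [wact]
  | succ m ih =>
      simp only [List.replicate_succ, wact, List.foldl_cons] at *
      rw [ih]
      simp [act]
      ring

lemma rysEdge_shift {n : ℕ} (hn : 2 ≤ n) (a : ZMod n → ZMod n) (q p c : ZMod n)
    (h : RysEdge a q p) : RysEdge a (q + c) (p + c) := by
  haveI : NeZero n := ⟨by omega⟩
  obtain ⟨w, he, hd⟩ := h
  have hc : ((c.val : ℕ) : ZMod n) = c := by
    simp [ZMod.natCast_val, ZMod.cast_id]
  have key : ∀ x y : ZMod n,
      wact a (w ++ List.replicate c.val true) y = x ↔ wact a w y = x - c := by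
    intro x y
    rw [wact_append, wact_replicate, hc]
    constructor <;> intro h <;> linear_combination h
  have hE : ∀ z : ZMod n, (∀ y, wact a w y ≠ z) ↔ z = q := by
    intro z; rw [← Set.mem_singleton_iff, ← he]; rfl
  have hD : ∀ z : ZMod n,
      (∃ q₁ q₂, q₁ ≠ q₂ ∧ wact a w q₁ = z ∧ wact a w q₂ = z) ↔ z = p := by
    intro z; rw [← Set.mem_singleton_iff, ← hd]; rfl
  refine ⟨w ++ List.replicate c.val true, ?_, ?_⟩
  · ext x
    simp only [excl, Set.mem_setOf_eq, Set.mem_singleton_iff]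
    constructor
    · intro hx
      have := (hE (x - c)).1 (fun y hy => hx y ((key x y).2 hy))
      linear_combination this
    · intro hx y hy
      exact (hE (x - c)).2 (by rw [hx]; ring) y ((key x y).1 hy)
  · ext x
    simp only [dupl, Set.mem_setOf_eq, Set.mem_singleton_iff]
    constructor
    · rintro ⟨q₁, q₂, hne, h1, h2⟩
      have := (hD (x - c)).1 ⟨q₁, q₂, hne, (key x q₁).1 h1, (key x q₂).1 h2⟩
      linear_combination this
    · intro hx
      obtain ⟨q₁, q₂, hne, h1, h2⟩ := (hD (x - c)).2 (by rw [hx]; ring)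
      exact ⟨q₁, q₂, hne, (key x q₁).2 h1, (key x q₂).2 h2⟩

theorem rysEdge_iff_diff {n : ℕ} (hn : 2 ≤ n) (a : ZMod n → ZMod n)
    (hstd : Standardized a) :
    ∀ q p : ZMod n, RysEdge a q p ↔ p - q ∈ D1 a := by
  intro q p
  constructor
  · intro h
    have := rysEdge_shift hn a q p (-q) h
    simpa [D1, sub_eq_add_neg] using this
  · intro h
    have := rysEdge_shift hn a 0 (p - q) q h
    simpa using this
end

section
/- Let ⟨Z_n,{a,b}⟩ be a standardized DFA and let r ≠ 0 with r·a = dupl(a). Then the difference set D₁ = {dupl(w) | w a word of defect 1 with excl(w) = 0} equals the orbit of dupl(a) under the submonoid generated by the actions of a and b^r a, i.e., D₁ = {dupl(a)·v | v ∈ {a, b^r a}*}. -/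
section Aux

variable {n : ℕ} {a : ZMod n → ZMod n} {r : ZMod n}

/-- The orbit set appearing on the RHS. -/
def orb {n : ℕ} (a : ZMod n → ZMod n) (r : ZMod n) : Set (ZMod n) :=
  {p | ∃ v : List Bool,
      v.foldl (fun q c => if c then a (q + r) else a q) (a 0) = p}

lemma wact_concat (w : List Bool) (c : Bool) (q : ZMod n) :
    wact a (w ++ [c]) q = act a (wact a w q) c := by
  simp [wact, List.foldl_append]

lemma act_true (q : ZMod n) : act a q true = q + 1 := rfl

lemma act_false (q : ZMod n) : act a q false = a q := rfl

lemma excl_eq_compl_range (w : List Bool) :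
    excl a w = (Set.range (wact a w))ᶜ := by
  ext q
  simp only [excl, Set.mem_setOf_eq, Set.mem_compl_iff, Set.mem_range, not_exists]

lemma a_ne_zero (h1 : Set.range a = {(0 : ZMod n)}ᶜ) (x : ZMod n) : a x ≠ 0 := by
  have : a x ∈ Set.range a := ⟨x, rfl⟩
  rw [h1] at this
  simpa using this

lemma a_surj (h1 : Set.range a = {(0 : ZMod n)}ᶜ) {y : ZMod n} (hy : y ≠ 0) :
    ∃ x, a x = y := by
  have : y ∈ Set.range a := by rw [h1]; simpa
  exact this

/-- The fiber structure of `a`: the only collision is `a 0 = a r`. -/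
lemma apair (hn : 2 ≤ n) (h1 : Set.range a = {(0 : ZMod n)}ᶜ)
    (hr : r ≠ 0) (hra : a r = a 0) :
    ∀ x y : ZMod n, a x = a y → x = y ∨ (x = 0 ∧ y = r) ∨ (x = r ∧ y = 0) := by
  haveI : NeZero n := ⟨by omega⟩
  -- `a` is injective away from `r`
  have himg : Finset.univ.image a = Finset.univ.erase 0 := by
    ext x
    have := Set.ext_iff.mp h1 x
    simp only [Set.mem_range, Set.mem_compl_iff, Set.mem_singleton_iff] at this
    simp only [Finset.mem_image, Finset.mem_univ, true_and, Finset.mem_erase, and_true]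
    constructor
    · rintro ⟨y, rfl⟩; exact this.mp ⟨y, rfl⟩
    · intro hx; obtain ⟨y, hy⟩ := this.mpr hx; exact ⟨y, hy⟩
  have himg2 : (Finset.univ.erase r).image a = Finset.univ.image a := by
    apply Finset.Subset.antisymm
    · exact Finset.image_subset_image (Finset.erase_subset _ _)
    · intro x hx
      simp only [Finset.mem_image, Finset.mem_univ, true_and] at hx
      obtain ⟨y, hy⟩ := hx
      simp only [Finset.mem_image, Finset.mem_erase, Finset.mem_univ, and_true]
      by_cases hyr : y = r
      · exact ⟨0, Ne.symm hr, by rw [← hra, ← hyr]; exact hy⟩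
      · exact ⟨y, hyr, hy⟩
  have hcard : ((Finset.univ.erase r).image a).card = (Finset.univ.erase r).card := by
    rw [himg2, himg, Finset.card_erase_of_mem (Finset.mem_univ _),
      Finset.card_erase_of_mem (Finset.mem_univ _)]
  have hinj : Set.InjOn a (Finset.univ.erase r) := Finset.injOn_of_card_image_eq hcard
  have hmem : ∀ x : ZMod n, x ≠ r → x ∈ ((Finset.univ.erase r : Finset (ZMod n)) : Set (ZMod n)) := by
    intro x hx
    rw [Finset.mem_coe, Finset.mem_erase]
    exact ⟨hx, Finset.mem_univ x⟩
  intro x y hxy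
  by_cases hx : x = r
  · by_cases hy : y = r
    · left; rw [hx, hy]
    · -- a y = a r = a 0, y ≠ r, so y = 0
      have : y = 0 := hinj (hmem y hy) (hmem 0 (Ne.symm hr)) (by rw [← hxy, hx, hra])
      right; right; exact ⟨hx, this⟩
  · by_cases hy : y = r
    · have : x = 0 := hinj (hmem x hx) (hmem 0 (Ne.symm hr)) (by rw [hxy, hy, hra])
      right; left; exact ⟨this, hy⟩
    · left; exact hinj (hmem x hx) (hmem y hy) hxy

/-- Appending the letter `a` to a word whose range misses `0` or `r` maps the
duplicate state by `a`. -/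
lemma dupl_concat_false (hn : 2 ≤ n) (h1 : Set.range a = {(0 : ZMod n)}ᶜ)
    (hr : r ≠ 0) (hra : a r = a 0) (w : List Bool) {p : ZMod n}
    (hd : dupl a w = {p})
    (hmiss : (0 : ZMod n) ∉ Set.range (wact a w) ∨ r ∉ Set.range (wact a w)) :
    dupl a (w ++ [false]) = {a p} := by
  have fib := apair hn h1 hr hra
  ext x
  simp only [dupl, Set.mem_setOf_eq, Set.mem_singleton_iff, wact_concat, act_false]
  constructor
  · rintro ⟨q₁, q₂, hne, e₁, e₂⟩
    rcases fib _ _ (e₁.trans e₂.symm) with h | ⟨h0, hr'⟩ | ⟨h0, hr'⟩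
    · have : wact a w q₁ ∈ dupl a w := ⟨q₁, q₂, hne, rfl, h ▸ rfl⟩
      rw [hd, Set.mem_singleton_iff] at this
      rw [← e₁, this]
    · exfalso
      rcases hmiss with hm | hm
      · exact hm ⟨q₁, h0⟩
      · exact hm ⟨q₂, hr'⟩
    · exfalso
      rcases hmiss with hm | hm
      · exact hm ⟨q₂, hr'⟩
      · exact hm ⟨q₁, h0⟩
  · rintro rfl
    have hp : p ∈ dupl a w := by rw [hd]; rfl
    obtain ⟨q₁, q₂, hne, e₁, e₂⟩ := hp
    exact ⟨q₁, q₂, hne, by simp [e₁], by simp [e₂]⟩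

/-- Appending the letter `a` to a word whose range is `{0}ᶜ` or `{r}ᶜ` gives
range `{0}ᶜ`. -/
lemma range_concat_false (h1 : Set.range a = {(0 : ZMod n)}ᶜ)
    (hr : r ≠ 0) (hra : a r = a 0) (w : List Bool) {c : ZMod n}
    (hc : c = 0 ∨ c = r) (hw : Set.range (wact a w) = {c}ᶜ) :
    Set.range (wact a (w ++ [false])) = {(0 : ZMod n)}ᶜ := by
  ext y
  simp only [Set.mem_range, Set.mem_compl_iff, Set.mem_singleton_iff, wact_concat, act_false]
  constructor
  · rintro ⟨x, rfl⟩; exact a_ne_zero h1 _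
  · intro hy
    obtain ⟨x, hx⟩ := a_surj h1 hy
    have hmem : ∀ z : ZMod n, z ≠ c → ∃ u, wact a w u = z := by
      intro z hz
      have : z ∈ Set.range (wact a w) := by rw [hw]; simpa
      exact this
    rcases hc with hc | hc
    · subst hc
      by_cases hx0 : x = 0
      · obtain ⟨u, hu⟩ := hmem r hr
        exact ⟨u, by rw [hu, hra, ← hx0, hx]⟩
      · obtain ⟨u, hu⟩ := hmem x hx0
        exact ⟨u, by rw [hu, hx]⟩
    · rw [hc] at hmem
      by_cases hxr : x = r
      · obtain ⟨u, hu⟩ := hmem 0 (Ne.symm hr)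
        exact ⟨u, by rw [hu, ← hra, ← hxr, hx]⟩
      · obtain ⟨u, hu⟩ := hmem x hxr
        exact ⟨u, by rw [hu, hx]⟩

lemma wact_concat_replicate (w : List Bool) (k : ℕ) (q : ZMod n) :
    wact a (w ++ List.replicate k true) q = wact a w q + k := by
  induction k with
  | zero => simp
  | succ k ih =>
      rw [List.replicate_succ', ← List.append_assoc, wact_concat, ih]
      simp [act]
      ring

/-- Orbit membership helpers. -/
lemma orb_base : a 0 ∈ orb a r := ⟨[], rfl⟩

lemma orb_stepA {p : ZMod n} (hp : p ∈ orb a r) : a p ∈ orb a r := by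
  obtain ⟨v, hv⟩ := hp
  exact ⟨v ++ [false], by simp [List.foldl_append, hv]⟩

lemma orb_stepB {p : ZMod n} (hp : p ∈ orb a r) : a (p + r) ∈ orb a r := by
  obtain ⟨v, hv⟩ := hp
  exact ⟨v ++ [true], by simp [List.foldl_append, hv]⟩

/-- Main lemma, hard direction: every defect-1 word's duplicate state (shifted by
the excluded state) lies in the orbit. -/
lemma main_sub (hn : 2 ≤ n) (h1 : Set.range a = {(0 : ZMod n)}ᶜ)
    (hr : r ≠ 0) (hra : a r = a 0) :
    ∀ w : List Bool, ∀ q : ZMod n, Set.range (wact a w) = {q}ᶜ →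
      ∃ p, dupl a w = {p} ∧ p - q ∈ orb a r := by
  haveI : NeZero n := ⟨by omega⟩
  have fib := apair hn h1 hr hra
  intro w
  induction w using List.reverseRecOn with
  | nil =>
      intro q h
      exfalso
      have : q ∈ ({q}ᶜ : Set (ZMod n)) := by
        rw [← h]; exact ⟨q, rfl⟩
      simp at this
  | append_singleton w c ih =>
      intro q h
      cases c with
      | true =>
          have hw : Set.range (wact a w) = {q - 1}ᶜ := by
            ext z
            have := Set.ext_iff.mp h (z + 1)
            simp only [Set.mem_range, Set.mem_compl_iff, Set.mem_singleton_iff,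
              wact_concat, act_true] at this ⊢
            constructor
            · rintro ⟨x, rfl⟩
              intro hzq
              have : wact a w x + 1 ≠ q := this.mp ⟨x, rfl⟩
              apply this
              rw [hzq]; ring
            · intro hz
              obtain ⟨x, hx⟩ := this.mpr (by intro hc; apply hz; rw [← hc]; ring)
              exact ⟨x, by linear_combination hx⟩
          obtain ⟨p, hd, ho⟩ := ih (q - 1) hw
          refine ⟨p + 1, ?_, ?_⟩
          · ext x
            simp only [dupl, Set.mem_setOf_eq, Set.mem_singleton_iff, wact_concat,
              act_true]
            constructor
            · rintro ⟨q₁, q₂, hne, e₁, e₂⟩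
              have : wact a w q₁ ∈ dupl a w :=
                ⟨q₁, q₂, hne, rfl, by linear_combination e₂ - e₁⟩
              rw [hd, Set.mem_singleton_iff] at this
              linear_combination this - e₁
            · rintro rfl
              have hp : p ∈ dupl a w := by rw [hd]; rfl
              obtain ⟨q₁, q₂, hne, e₁, e₂⟩ := hp
              exact ⟨q₁, q₂, hne, by rw [e₁], by rw [e₂]⟩
          · have : p + 1 - q = p - (q - 1) := by ring
            rw [this]; exact ho
      | false =>
          -- the excluded state must be 0
          have hq : q = 0 := by
            by_contra hq
            have : (0 : ZMod n) ∈ Set.range (wact a (w ++ [false])) := by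
              rw [h]
              simp only [Set.mem_compl_iff, Set.mem_singleton_iff]
              exact Ne.symm hq
            obtain ⟨x, hx⟩ := this
            rw [wact_concat] at hx
            exact a_ne_zero h1 _ hx
          subst hq
          by_cases hsurj : Function.Surjective (wact a w)
          · have hinj : Function.Injective (wact a w) :=
              Finite.injective_iff_surjective.mpr hsurj
            refine ⟨a 0, ?_, by simpa using orb_base⟩
            ext x
            simp only [dupl, Set.mem_setOf_eq, Set.mem_singleton_iff, wact_concat, act_false]
            constructor
            · rintro ⟨q₁, q₂, hne, e₁, e₂⟩
              have hne' : wact a w q₁ ≠ wact a w q₂ := fun hc => hne (hinj hc)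
              rcases fib _ _ (e₁.trans e₂.symm) with hc | ⟨h0, _⟩ | ⟨h0, _⟩
              · exact absurd hc hne'
              · rw [← e₁, h0]
              · rw [← e₁, h0, hra]
            · rintro rfl
              obtain ⟨q₁, hq₁⟩ := hsurj 0
              obtain ⟨q₂, hq₂⟩ := hsurj r
              refine ⟨q₁, q₂, ?_, by rw [hq₁], by rw [hq₂, hra]⟩
              intro hc; apply hr; rw [← hq₂, ← hc, hq₁]
          · rw [Function.Surjective] at hsurj
            push_neg at hsurj
            obtain ⟨q₀, hq₀⟩ := hsurj
            have hq₀' : q₀ ∉ Set.range (wact a w) := by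
              rintro ⟨x, hx⟩; exact hq₀ x hx
            -- a state missing from the range of `w` must be `0` or `r`
            have key : ∀ z : ZMod n, z ∉ Set.range (wact a w) →
                ∃ x, (wact a w x = 0 ∧ z = r) ∨ (wact a w x = r ∧ z = 0) := by
              intro z hz
              have : a z ∈ Set.range (wact a (w ++ [false])) := by
                rw [h]; simpa using a_ne_zero h1 z
              obtain ⟨x, hx⟩ := this
              rw [wact_concat] at hx
              rcases fib _ _ hx with hc | hc | hc
              · exact absurd ⟨x, hc⟩ hz
              · exact ⟨x, Or.inl hc⟩
              · exact ⟨x, Or.inr hc⟩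
            have hq0r : q₀ = 0 ∨ q₀ = r := by
              obtain ⟨x, hx⟩ := key q₀ hq₀'
              rcases hx with ⟨_, h'⟩ | ⟨_, h'⟩
              · exact Or.inr h'
              · exact Or.inl h'
            have hrange : Set.range (wact a w) = {q₀}ᶜ := by
              ext z
              simp only [Set.mem_compl_iff, Set.mem_singleton_iff]
              constructor
              · rintro hz rfl; exact hq₀' hz
              · intro hz
                by_contra hznot
                obtain ⟨x, hx⟩ := key z hznot
                rcases hx with ⟨hx0, rfl⟩ | ⟨hxr, rfl⟩
                · -- z = r, so q₀ = 0; then wact a w x = 0 = q₀ contradicts hq₀'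
                  rcases hq0r with rfl | rfl
                  · exact hq₀' ⟨x, hx0⟩
                  · exact hz rfl
                · rcases hq0r with rfl | rfl
                  · exact hz rfl
                  · exact hq₀' ⟨x, hxr⟩
            obtain ⟨p, hd, ho⟩ := ih q₀ hrange
            refine ⟨a p, ?_, ?_⟩
            · apply dupl_concat_false hn h1 hr hra w hd
              rcases hq0r with hc | hc
              · exact Or.inl (hc ▸ hq₀')
              · exact Or.inr (hc ▸ hq₀')
            · rw [sub_zero]
              rcases hq0r with hc | hc
              · rw [hc, sub_zero] at ho
                exact orb_stepA ho
              · rw [hc] at ho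
                have hap : a p = a ((p - r) + r) := by rw [sub_add_cancel]
                rw [hap]
                exact orb_stepB ho

/-- Easy direction: every orbit element is realized by some word. -/
lemma main_sup (hn : 2 ≤ n) (h1 : Set.range a = {(0 : ZMod n)}ᶜ)
    (hr : r ≠ 0) (hra : a r = a 0) :
    ∀ v : List Bool, ∃ w : List Bool,
      Set.range (wact a w) = {(0 : ZMod n)}ᶜ ∧
      dupl a w = {v.foldl (fun q c => if c then a (q + r) else a q) (a 0)} := by
  haveI : NeZero n := ⟨by omega⟩
  have fib := apair hn h1 hr hra
  intro v
  induction v using List.reverseRecOn with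
  | nil =>
      simp only [List.foldl_nil]
      refine ⟨[false], ?_, ?_⟩
      · have : wact a [false] = a := by
          funext q; simp [wact, act]
        rw [this, h1]
      · ext x
        simp only [dupl, Set.mem_setOf_eq, Set.mem_singleton_iff]
        have hw : ∀ q, wact a [false] q = a q := by intro q; simp [wact, act]
        constructor
        · rintro ⟨q₁, q₂, hne, e₁, e₂⟩
          rw [hw] at e₁ e₂
          rcases fib _ _ (e₁.trans e₂.symm) with hc | ⟨h0, _⟩ | ⟨h0, _⟩
          · exact absurd hc hne
          · rw [← e₁, h0]
          · rw [← e₁, h0, hra]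
        · rintro rfl
          exact ⟨0, r, Ne.symm hr, by rw [hw], by rw [hw, hra]⟩
  | append_singleton v c ih =>
      obtain ⟨w, hrange, hd⟩ := ih
      cases c with
      | false =>
          refine ⟨w ++ [false], ?_, ?_⟩
          · exact range_concat_false h1 hr hra w (Or.inl rfl) hrange
          · rw [List.foldl_append]
            simp only [List.foldl_cons, List.foldl_nil, Bool.false_eq_true, if_false]
            apply dupl_concat_false hn h1 hr hra w hd
            left; rw [hrange]; simp
      | true =>
          set p := v.foldl (fun q c => if c then a (q + r) else a q) (a 0) with hp
          have hcast : ((r.val : ℕ) : ZMod n) = r := by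
            simp [ZMod.natCast_val, ZMod.cast_id]
          set w₁ := w ++ List.replicate r.val true with hw₁
          have hact : ∀ q, wact a w₁ q = wact a w q + r := by
            intro q; rw [hw₁, wact_concat_replicate, hcast]
          have hrange₁ : Set.range (wact a w₁) = {r}ᶜ := by
            ext z
            simp only [Set.mem_range, Set.mem_compl_iff, Set.mem_singleton_iff, hact]
            have hz := Set.ext_iff.mp hrange (z - r)
            simp only [Set.mem_range, Set.mem_compl_iff, Set.mem_singleton_iff] at hz
            constructor
            · rintro ⟨x, rfl⟩
              intro hc
              have h0 : wact a w x = 0 := by linear_combination hc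
              have := hz.mp ⟨x, by linear_combination⟩
              exact this (by rw [h0]; ring)
            · intro hzr
              obtain ⟨x, hx⟩ := hz.mpr (by intro hc; apply hzr; linear_combination hc)
              exact ⟨x, by linear_combination hx⟩
          have hd₁ : dupl a w₁ = {p + r} := by
            ext x
            simp only [dupl, Set.mem_setOf_eq, Set.mem_singleton_iff, hact]
            have hx := Set.ext_iff.mp hd (x - r)
            simp only [dupl, Set.mem_setOf_eq, Set.mem_singleton_iff] at hx
            constructor
            · rintro ⟨q₁, q₂, hne, e₁, e₂⟩
              have := hx.mp ⟨q₁, q₂, hne, by linear_combination e₁, by linear_combination e₂⟩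
              linear_combination this
            · intro hxpr
              obtain ⟨q₁, q₂, hne, e₁, e₂⟩ := hx.mpr (by linear_combination hxpr)
              exact ⟨q₁, q₂, hne, by linear_combination e₁, by linear_combination e₂⟩
          refine ⟨w₁ ++ [false], ?_, ?_⟩
          · exact range_concat_false h1 hr hra w₁ (Or.inr rfl) hrange₁
          · rw [List.foldl_append]
            simp only [List.foldl_cons, List.foldl_nil, if_pos rfl]
            apply dupl_concat_false hn h1 hr hra w₁ hd₁
            right; rw [hrange₁]; simp

end Aux

theorem D1_eq_orbit {n : ℕ} (hn : 2 ≤ n) (a : ZMod n → ZMod n)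
    (h1 : Set.range a = {(0 : ZMod n)}ᶜ)
    (r : ZMod n) (hr : r ≠ 0) (hra : a r = a 0) :
    D1 a = {p | ∃ v : List Bool,
      v.foldl (fun q c => if c then a (q + r) else a q) (a 0) = p} := by
  ext p
  constructor
  · rintro ⟨w, hexcl, hdupl⟩
    have hrange : Set.range (wact a w) = {(0 : ZMod n)}ᶜ := by
      have := excl_eq_compl_range (a := a) w
      rw [hexcl] at this
      rw [← compl_compl (Set.range (wact a w)), ← this]
    obtain ⟨p', hd', ho⟩ := main_sub hn h1 hr hra w 0 hrange
    rw [hdupl] at hd'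
    have : p = p' := by
      have := Set.ext_iff.mp hd' p
      simpa using this
    rw [sub_zero] at ho
    rw [this]
    exact ho
  · rintro ⟨v, hv⟩
    obtain ⟨w, hrange, hd⟩ := main_sup hn h1 hr hra v
    refine ⟨w, ?_, ?_⟩
    · rw [excl_eq_compl_range, hrange, compl_compl]
    · rw [hd, hv]
end

section
/- In any standardized DFA ⟨Z_n,{a,b}⟩ with n ≤ 11 states that is completely reachable, the difference set D₁ generates the whole group (Z_n,+) (equivalently, the Rystsov graph is strongly connected). -/
lemma mem_excl {n : ℕ} (a : ZMod n → ZMod n) (w : List Bool) (q : ZMod n) :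
    q ∈ excl a w ↔ ∀ p, wact a w p ≠ q := Iff.rfl

lemma mem_dupl {n : ℕ} (a : ZMod n → ZMod n) (w : List Bool) (p : ZMod n) :
    p ∈ dupl a w ↔ ∃ q₁ q₂, q₁ ≠ q₂ ∧ wact a w q₁ = p ∧ wact a w q₂ = p := Iff.rfl

lemma wact_replicate_true {n : ℕ} (a : ZMod n → ZMod n) (m : ℕ) (s : ZMod n) :
    wact a (List.replicate m true) s = s + m := by
  induction m generalizing s with
  | zero => simp [wact]
  | succ k ih =>
      rw [List.replicate_succ]
      show wact a (true :: List.replicate k true) s = _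
      have : wact a (true :: List.replicate k true) s
          = wact a (List.replicate k true) (act a s true) := rfl
      rw [this, ih]
      show s + 1 + (k : ZMod n) = s + ((k : ℕ) + 1 : ℕ)
      push_cast
      ring

/-- the key word-extension step -/
lemma D1_step {n : ℕ} [NeZero n] (a : ZMod n → ZMod n) (r : ZMod n)
    (han0 : ∀ x, a x ≠ 0)
    (hcol : ∀ x y : ZMod n, a x = a y → x ≠ y → (x = 0 ∧ y = r) ∨ (x = r ∧ y = 0))
    (k : ZMod n) (hk : k = 0 ∨ k = r)
    (hsurjk : ∀ y : ZMod n, y ≠ 0 → ∃ x, x ≠ k ∧ a x = y)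
    {d : ZMod n} (hd : d ∈ D1 a) : a (d + k) ∈ D1 a := by
  obtain ⟨w, hw1, hw2⟩ := hd
  have h0excl : ∀ p, wact a w p ≠ 0 := by
    have : (0 : ZMod n) ∈ excl a w := by rw [hw1]; rfl
    exact this
  have hrangef : ∀ y : ZMod n, y ≠ 0 → ∃ p, wact a w p = y := by
    intro y hy
    by_contra hno
    push_neg at hno
    have : y ∈ excl a w := hno
    rw [hw1] at this
    exact hy this
  have hdd : d ∈ dupl a w := by rw [hw2]; rfl
  obtain ⟨q₁, q₂, hq, hv1, hv2⟩ := hdd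
  refine ⟨w ++ (List.replicate k.val true ++ [false]), ?_, ?_⟩
  · -- excl = {0}
    have hwact' : ∀ q, wact a (w ++ (List.replicate k.val true ++ [false])) q
        = a (wact a w q + k) := by
      intro q
      rw [wact_append, wact_append, wact_replicate_true]
      rw [ZMod.natCast_rightInverse k]
      rfl
    ext q
    simp only [mem_excl, hwact', Set.mem_singleton_iff]
    constructor
    · intro hall
      by_contra hq0
      obtain ⟨x, hxk, hax⟩ := hsurjk q hq0
      obtain ⟨p, hp⟩ := hrangef (x - k) (by
        intro hc
        exact hxk (by rwa [sub_eq_zero] at hc))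
      exact hall p (by rw [hp, sub_add_cancel, hax])
    · rintro rfl p
      exact han0 _
  · -- dupl = {a (d + k)}
    have hwact' : ∀ q, wact a (w ++ (List.replicate k.val true ++ [false])) q
        = a (wact a w q + k) := by
      intro q
      rw [wact_append, wact_append, wact_replicate_true]
      rw [ZMod.natCast_rightInverse k]
      rfl
    ext p
    simp only [mem_dupl, hwact', Set.mem_singleton_iff]
    constructor
    · rintro ⟨s₁, s₂, hs, h1, h2⟩
      by_cases he : wact a w s₁ = wact a w s₂
      · have : wact a w s₁ ∈ dupl a w := ⟨s₁, s₂, hs, rfl, he.symm⟩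
        rw [hw2] at this
        rw [← h1, this]
      · have hne : wact a w s₁ + k ≠ wact a w s₂ + k := by
          intro hc; exact he (by simpa using hc)
        rcases hcol _ _ (h1.trans h2.symm) hne with ⟨ha0, har⟩ | ⟨har, ha0⟩
        · rcases hk with rfl | rfl
          · exact absurd (by simpa using ha0) (h0excl s₁)
          · exact absurd (by simpa using har) (h0excl s₂)
        · rcases hk with rfl | rfl
          · exact absurd (by simpa using ha0) (h0excl s₂)
          · exact absurd (by simpa using har) (h0excl s₁)
    · rintro rfl
      exact ⟨q₁, q₂, hq, by rw [hv1], by rw [hv2]⟩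

lemma a0_mem_D1 {n : ℕ} (a : ZMod n → ZMod n) (r : ZMod n)
    (han0 : ∀ x, a x ≠ 0)
    (hsurj : ∀ y : ZMod n, y ≠ 0 → ∃ x, a x = y)
    (hr0 : r ≠ 0) (hra : a r = a 0)
    (hcol : ∀ x y : ZMod n, a x = a y → x ≠ y → (x = 0 ∧ y = r) ∨ (x = r ∧ y = 0)) :
    a 0 ∈ D1 a := by
  have hwact : ∀ q, wact a [false] q = a q := fun q => rfl
  refine ⟨[false], ?_, ?_⟩
  · ext q
    simp only [mem_excl, hwact, Set.mem_singleton_iff]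
    constructor
    · intro hall
      by_contra hq0
      obtain ⟨x, hax⟩ := hsurj q hq0
      exact hall x hax
    · rintro rfl p; exact han0 p
  · ext p
    simp only [mem_dupl, hwact, Set.mem_singleton_iff]
    constructor
    · rintro ⟨q₁, q₂, hq, h1, h2⟩
      rcases hcol q₁ q₂ (h1.trans h2.symm) hq with ⟨h, _⟩ | ⟨_, h⟩
      · rw [← h1, h]
      · rw [← h2, h]
    · rintro rfl
      exact ⟨0, r, Ne.symm hr0, rfl, hra⟩

lemma D1_ne_zero {n : ℕ} (a : ZMod n → ZMod n) {d : ZMod n} (hd : d ∈ D1 a) : d ≠ 0 := by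
  obtain ⟨w, hw1, hw2⟩ := hd
  have h0excl : ∀ p, wact a w p ≠ 0 := by
    have : (0 : ZMod n) ∈ excl a w := by rw [hw1]; rfl
    exact this
  have hdd : d ∈ dupl a w := by rw [hw2]; rfl
  obtain ⟨q₁, _, _, hv1, _⟩ := hdd
  intro hc
  exact h0excl q₁ (by rw [hv1, hc])

theorem small_n_strongly_connected {n : ℕ} (hn : 2 ≤ n) (hn' : n ≤ 11)
    (a : ZMod n → ZMod n) (hstd : Standardized a) (hcr : CompletelyReachable a) :
    AddSubgroup.closure (D1 a) = ⊤ := by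
  haveI : NeZero n := ⟨by omega⟩
  obtain ⟨hrange, r, hr0, hra⟩ := hstd
  by_contra hne
  set G := AddSubgroup.closure (D1 a) with hGdef
  -- basic function facts
  have han0 : ∀ x, a x ≠ 0 := by
    intro x
    have : a x ∈ Set.range a := Set.mem_range_self x
    rw [hrange] at this
    exact this
  have hsurj : ∀ y : ZMod n, y ≠ 0 → ∃ x, a x = y := by
    intro y hy
    have : y ∈ Set.range a := by rw [hrange]; exact hy
    exact this
  have hinj : ∀ x y : ZMod n, x ≠ 0 → y ≠ 0 → a x = a y → x = y := by
    by_contra hc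
    push_neg at hc
    obtain ⟨x, y, hx, hy, hxy, hne'⟩ := hc
    have himg : a '' ({(0 : ZMod n)}ᶜ \ {y}) = {(0 : ZMod n)}ᶜ := by
      ext z
      constructor
      · rintro ⟨u, _, rfl⟩; exact han0 u
      · intro hz
        have hz' : z ≠ 0 := hz
        obtain ⟨u, hu⟩ := hsurj z hz'
        by_cases hu0 : u = 0
        · subst hu0
          by_cases hry : r = y
          · exact ⟨x, ⟨hx, hne'⟩, by rw [hxy, ← hry, hra, hu]⟩
          · exact ⟨r, ⟨hr0, hry⟩, by rw [hra, hu]⟩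
        · by_cases huy : u = y
          · exact ⟨x, ⟨hx, hne'⟩, by rw [hxy, ← huy, hu]⟩
          · exact ⟨u, ⟨hu0, huy⟩, hu⟩
    have h1 : ({(0 : ZMod n)}ᶜ : Set (ZMod n)).ncard
        ≤ (({(0 : ZMod n)}ᶜ \ {y} : Set (ZMod n))).ncard := by
      conv_lhs => rw [← himg]
      exact Set.ncard_image_le (Set.toFinite _)
    have h2 : (({(0 : ZMod n)}ᶜ \ {y} : Set (ZMod n))).ncard
        < ({(0 : ZMod n)}ᶜ : Set (ZMod n)).ncard :=
      Set.ncard_diff_singleton_lt_of_mem hy (Set.toFinite _)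
    omega
  have hcol : ∀ x y : ZMod n, a x = a y → x ≠ y → (x = 0 ∧ y = r) ∨ (x = r ∧ y = 0) := by
    intro x y hxy hne'
    by_cases hx : x = 0
    · subst hx
      have hy0 : y ≠ 0 := fun h => hne' h.symm
      exact Or.inl ⟨rfl, hinj y r hy0 hr0 (by rw [← hxy, hra])⟩
    · by_cases hy : y = 0
      · subst hy
        exact Or.inr ⟨hinj x r hx hr0 (by rw [hxy, hra]), rfl⟩
      · exact absurd (hinj x y hx hy hxy) hne'
  -- D1 closure facts
  have ha0D : a 0 ∈ D1 a := a0_mem_D1 a r han0 hsurj hr0 hra hcol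
  have hstepA : ∀ d ∈ D1 a, a d ∈ D1 a := by
    intro d hd
    have hsk : ∀ y : ZMod n, y ≠ 0 → ∃ x, x ≠ (0 : ZMod n) ∧ a x = y := by
      intro y hy
      obtain ⟨x, hx⟩ := hsurj y hy
      by_cases hx0 : x = 0
      · exact ⟨r, hr0, by rw [hra, ← hx0, hx]⟩
      · exact ⟨x, hx0, hx⟩
    have := D1_step a r han0 hcol 0 (Or.inl rfl) hsk hd
    simpa using this
  have hstepB : ∀ d ∈ D1 a, a (d + r) ∈ D1 a := by
    intro d hd
    have hsk : ∀ y : ZMod n, y ≠ 0 → ∃ x, x ≠ r ∧ a x = y := by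
      intro y hy
      obtain ⟨x, hx⟩ := hsurj y hy
      by_cases hxr : x = r
      · exact ⟨0, Ne.symm hr0, by rw [← hra, ← hxr, hx]⟩
      · exact ⟨x, hxr, hx⟩
    exact D1_step a r han0 hcol r (Or.inr rfl) hsk hd
  have hsubG : D1 a ⊆ (G : Set (ZMod n)) := AddSubgroup.subset_closure
  -- a maps D1 onto D1
  have himageD : a '' D1 a = D1 a := by
    apply Set.eq_of_subset_of_ncard_le
    · rintro _ ⟨d, hd, rfl⟩; exact hstepA d hd
    · rw [Set.ncard_image_of_injOn]
      intro x hx y hy hxy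
      exact hinj x y (D1_ne_zero a hx) (D1_ne_zero a hy) hxy
    · exact Set.toFinite _
  have hrD : r ∈ D1 a := by
    have : a 0 ∈ a '' D1 a := by rw [himageD]; exact ha0D
    obtain ⟨d, hd, hda⟩ := this
    rcases hcol d 0 hda (D1_ne_zero a hd) with ⟨h, _⟩ | ⟨h, _⟩
    · exact absurd h (D1_ne_zero a hd)
    · rwa [← h]
  have hplusr : ∀ x, x ∈ D1 a ∪ {0} → x + r ∈ D1 a ∪ {0} := by
    rintro x (hx | hx)
    · by_cases hxr : x + r = 0
      · exact Or.inr hxr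
      · left
        have h1 := hstepB x hx
        rw [← himageD] at h1
        obtain ⟨d, hd, hda⟩ := h1
        rcases eq_or_ne d (x + r) with h | h
        · rwa [← h]
        · rcases hcol d (x + r) hda h with ⟨h0, _⟩ | ⟨_, h0⟩
          · exact absurd h0 (D1_ne_zero a hd)
          · exact absurd h0 hxr
    · rw [Set.mem_singleton_iff] at hx
      subst hx
      rw [zero_add]
      exact Or.inl hrD
    -- K = closure {r}
  set K := AddSubgroup.closure ({r} : Set (ZMod n)) with hKdef
  have hrK : r ∈ K := AddSubgroup.subset_closure rfl
  have hKnat : ∀ m : ℕ, (m • r : ZMod n) ∈ D1 a ∪ {0} := by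
    intro m
    induction m with
    | zero => right; simp
    | succ k ih =>
        rw [succ_nsmul]
        exact hplusr _ ih
  have hKsub : (K : Set (ZMod n)) ⊆ D1 a ∪ {0} := by
    intro x hx
    rw [SetLike.mem_coe, AddSubgroup.mem_closure_singleton] at hx
    obtain ⟨m, hm⟩ := hx
    have hn0 : ((n : ℤ)) ≠ 0 := by
      exact_mod_cast (by omega : n ≠ 0)
    have hnr : ((n : ℤ)) • r = 0 := by
      rw [zsmul_eq_mul]
      push_cast
      rw [ZMod.natCast_self]
      ring
    have h0 : (0 : ℤ) ≤ m % (n : ℤ) := Int.emod_nonneg m hn0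
    have key : x = ((m % (n : ℤ)).toNat) • r := by
      rw [← hm]
      conv_lhs => rw [← Int.mul_ediv_add_emod m (n : ℤ)]
      rw [add_smul, mul_comm, mul_smul, hnr, smul_zero, zero_add]
      rw [← natCast_zsmul r (m % (n : ℤ)).toNat, Int.toNat_of_nonneg h0]
    rw [key]
    exact hKnat _
  have hKG : K ≤ G := by
    rw [hKdef, AddSubgroup.closure_le]
    exact Set.singleton_subset_iff.mpr (hsubG hrD)
  -- cardinalities
  have hbridgeG : Nat.card G = (G : Set (ZMod n)).ncard := by
    rw [← Nat.card_coe_set_eq, SetLike.coe_sort_coe]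
  have hbridgeK : Nat.card K = (K : Set (ZMod n)).ncard := by
    rw [← Nat.card_coe_set_eq, SetLike.coe_sort_coe]
  have hGdvd : Nat.card G ∣ n := by
    refine ⟨G.index, ?_⟩
    rw [AddSubgroup.card_mul_index, Nat.card_zmod]
  have hGne : Nat.card G ≠ n := by
    intro hc
    apply hne
    have huniv : (G : Set (ZMod n)) = Set.univ := by
      apply Set.eq_of_subset_of_ncard_le (Set.subset_univ _) _ (Set.toFinite _)
      rw [Set.ncard_univ, Nat.card_zmod, ← hbridgeG, hc]
    rw [AddSubgroup.eq_top_iff']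
    intro x
    have : x ∈ (G : Set (ZMod n)) := by rw [huniv]; trivial
    exact this
  have hGpos : 0 < Nat.card G := Nat.card_pos
  have hG5 : Nat.card G ≤ 5 := by
    obtain ⟨t, ht⟩ := hGdvd
    have ht2 : 2 ≤ t := by
      by_contra hlt
      push_neg at hlt
      interval_cases t
      · simp at ht; omega
      · simp at ht; exact hGne ht.symm
    have h2 : Nat.card G * 2 ≤ Nat.card G * t := Nat.mul_le_mul_left _ ht2
    omega
  have hKdvd : Nat.card K ∣ Nat.card G := AddSubgroup.card_dvd_of_le hKG
  have hK2 : 2 ≤ Nat.card K := by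
    rw [hbridgeK]
    have hsub : ({0, r} : Set (ZMod n)) ⊆ (K : Set (ZMod n)) := by
      rintro x (rfl | rfl)
      · exact AddSubgroup.zero_mem K
      · exact hrK
    have := Set.ncard_le_ncard hsub (Set.toFinite _)
    rwa [Set.ncard_pair (Ne.symm hr0)] at this
  have hD'G : D1 a ∪ {0} ⊆ (G : Set (ZMod n)) := by
    rintro x (hx | hx)
    · exact hsubG hx
    · rw [Set.mem_singleton_iff] at hx
      subst hx
      exact AddSubgroup.zero_mem G
  -- main coset-structure step : ↑G ⊆ D1 ∪ {0}
  have hSG : (G : Set (ZMod n)) ⊆ D1 a ∪ {0} := by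
    by_cases hKGeq : Nat.card K = Nat.card G
    · have hKGset : (K : Set (ZMod n)) = (G : Set (ZMod n)) := by
        apply Set.eq_of_subset_of_ncard_le (fun x hx => hKG hx)
        rw [← hbridgeG, ← hbridgeK, hKGeq]
      rw [← hKGset]
      exact hKsub
    · -- |K| = 2, |G| = 4 case
      obtain ⟨t, ht⟩ := hKdvd
      have ht2 : 2 ≤ t := by
        by_contra hlt
        push_neg at hlt
        interval_cases t
        · simp at ht; omega
        · simp at ht; exact hKGeq ht.symm
      have hKle : Nat.card K * 2 ≤ Nat.card K * t := Nat.mul_le_mul_left _ ht2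
      have hK2' : Nat.card K = 2 := by omega
      have hG4 : Nat.card G = 4 := by
        rw [hK2'] at ht
        omega
      have hKset : (K : Set (ZMod n)) = {0, r} := by
        symm
        apply Set.eq_of_subset_of_ncard_le
        · rintro x (rfl | rfl)
          · exact AddSubgroup.zero_mem K
          · exact hrK
        · rw [← hbridgeK, hK2', Set.ncard_pair (Ne.symm hr0)]
        · exact Set.toFinite _
      have ho : ∃ o ∈ D1 a, o ∉ (K : Set (ZMod n)) := by
        by_contra hcon
        push_neg at hcon
        have hGK : G ≤ K := by
          rw [hGdef, AddSubgroup.closure_le]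
          exact hcon
        have := Set.ncard_le_ncard (show (G : Set (ZMod n)) ⊆ (K : Set (ZMod n)) from
          fun x hx => hGK hx) (Set.toFinite _)
        rw [← hbridgeG, ← hbridgeK, hG4, hK2'] at this
        omega
      obtain ⟨o, hoD, hoK⟩ := ho
      rw [hKset] at hoK
      simp only [Set.mem_insert_iff, Set.mem_singleton_iff, not_or] at hoK
      obtain ⟨ho0, hor⟩ := hoK
      -- -r = r
      have hnegr : -r = r := by
        have h1 : -r ∈ (K : Set (ZMod n)) := AddSubgroup.neg_mem K hrK
        rw [hKset] at h1
        rcases h1 with h | h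
        · exact absurd (neg_eq_zero.mp h) hr0
        · exact h
      have horr : o + r ≠ 0 := by
        intro hc
        have : o = -r := eq_neg_of_add_eq_zero_left hc
        rw [hnegr] at this
        exact hor this
      have horr2 : o + r ≠ r := fun hc => ho0 (by
        have := add_right_cancel (b := r) (a := o) (c := 0) (by rw [hc, zero_add])
        exact this)
      have horr3 : o + r ≠ o := fun hc => hr0 (by
        have := add_left_cancel (a := o) (b := r) (c := 0) (by rw [hc, add_zero])
        exact this)
      have hXsub : ({0, r, o, o + r} : Set (ZMod n)) ⊆ D1 a ∪ {0} := by
        rintro x (rfl | rfl | rfl | rfl)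
        · exact Or.inr rfl
        · exact Or.inl hrD
        · exact Or.inl hoD
        · exact hplusr o (Or.inl hoD)
      have hXG : ({0, r, o, o + r} : Set (ZMod n)) ⊆ (G : Set (ZMod n)) :=
        fun x hx => hD'G (hXsub hx)
      have hXcard : ({0, r, o, o + r} : Set (ZMod n)).ncard = 4 := by
        rw [Set.ncard_insert_of_notMem (by
          simp only [Set.mem_insert_iff, Set.mem_singleton_iff, not_or]
          exact ⟨Ne.symm hr0, Ne.symm ho0, Ne.symm horr⟩) (Set.toFinite _)]
        rw [Set.ncard_insert_of_notMem (by
          simp only [Set.mem_insert_iff, Set.mem_singleton_iff, not_or]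
          exact ⟨Ne.symm hor, Ne.symm horr2⟩) (Set.toFinite _)]
        rw [Set.ncard_pair (Ne.symm horr3)]
      have hGX : ({0, r, o, o + r} : Set (ZMod n)) = (G : Set (ZMod n)) := by
        apply Set.eq_of_subset_of_ncard_le hXG
        rw [← hbridgeG, hG4, hXcard]
      rw [← hGX]
      exact hXsub
    -- consequences of hSG
  have hD1G : ∀ x : ZMod n, x ∈ G → x ≠ 0 → x ∈ D1 a := by
    intro x hx hx0
    rcases hSG hx with h | h
    · exact h
    · exact absurd h hx0
  have hGa : ∀ x : ZMod n, x ∈ G → a x ∈ G := by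
    intro x hx
    rcases eq_or_ne x 0 with rfl | hx0
    · exact hsubG ha0D
    · exact hsubG (hstepA x (hD1G x hx hx0))
  have hGinv : ∀ x : ZMod n, a x ∈ G → x ∈ G := by
    intro x hax
    have haxD : a x ∈ D1 a := hD1G _ hax (han0 x)
    rw [← himageD] at haxD
    obtain ⟨d, hd, hda⟩ := haxD
    rcases eq_or_ne d x with rfl | hdx
    · exact hsubG hd
    · rcases hcol d x hda hdx with ⟨h0, _⟩ | ⟨_, h0⟩
      · exact absurd h0 (D1_ne_zero a hd)
      · rw [h0]; exact AddSubgroup.zero_mem G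
  -- the unreachable family
  have hmain : ∀ (w : List Bool) (x : ZMod n),
      Set.range (wact a w) ≠ {y : ZMod n | y + x ∉ G} := by
    intro w
    induction w using List.reverseRecOn with
    | nil =>
        intro x h
        have hmem : (-x) ∈ Set.range (wact a ([] : List Bool)) := ⟨-x, rfl⟩
        rw [h] at hmem
        exact hmem (by rw [neg_add_cancel]; exact AddSubgroup.zero_mem G)
    | append_singleton w c ih =>
        intro x h
        have hsplit : ∀ q, wact a (w ++ [c]) q = act a (wact a w q) c := by
          intro q
          rw [wact_append]
          rfl
        cases c with
        | true =>
            apply ih (x + 1)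
            ext y
            constructor
            · rintro ⟨q, rfl⟩
              have hmem : wact a w q + 1 ∈ Set.range (wact a (w ++ [true])) :=
                ⟨q, by rw [hsplit]; rfl⟩
              rw [h] at hmem
              have : wact a w q + 1 + x ∉ G := hmem
              intro hc
              exact this (by
                rw [show wact a w q + 1 + x = wact a w q + (x + 1) from by ring]
                exact hc)
            · intro hy
              have hy' : y + 1 + x ∉ G := by
                intro hc
                exact hy (by
                  rw [show y + (x + 1) = y + 1 + x from by ring]
                  exact hc)
              have : y + 1 ∈ Set.range (wact a (w ++ [true])) := by
                rw [h]; exact hy'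
              obtain ⟨q, hq⟩ := this
              rw [hsplit] at hq
              exact ⟨q, by
                have : wact a w q + 1 = y + 1 := hq
                exact add_right_cancel this⟩
        | false =>
            have hxG : x ∈ G := by
              by_contra hxg
              have h0 : (0 : ZMod n) ∈ Set.range (wact a (w ++ [false])) := by
                rw [h]
                show (0 : ZMod n) + x ∉ G
                rwa [zero_add]
              obtain ⟨q, hq⟩ := h0
              rw [hsplit] at hq
              exact han0 _ hq
            have h' : Set.range (wact a (w ++ [false])) = {y : ZMod n | y ∉ G} := by
              rw [h]
              ext y
              simp only [Set.mem_setOf_eq]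
              constructor
              · intro hy hc
                exact hy (G.add_mem hc hxG)
              · intro hy hc
                have hsub := G.sub_mem hc hxG
                simp only [add_sub_cancel_right] at hsub
                exact hy hsub
            apply ih 0
            have heq : {y : ZMod n | y + 0 ∉ G} = {y : ZMod n | y ∉ G} := by
              ext y; simp
            rw [heq]
            ext y
            constructor
            · rintro ⟨q, rfl⟩
              intro hyG
              have hmem : a (wact a w q) ∈ Set.range (wact a (w ++ [false])) :=
                ⟨q, by rw [hsplit]; rfl⟩
              rw [h'] at hmem
              exact hmem (hGa _ hyG)
            · intro hyG
              have hyG' : y ∉ G := hyG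
              have hay : a y ∉ G := fun hc => hyG' (hGinv _ hc)
              have : a y ∈ Set.range (wact a (w ++ [false])) := by
                rw [h']; exact hay
              obtain ⟨q, hq⟩ := this
              rw [hsplit] at hq
              have hq' : a (wact a w q) = a y := hq
              have hqG : wact a w q ∉ G := by
                intro hc
                have := hGa _ hc
                rw [hq'] at this
                exact hay this
              have h1 : wact a w q ≠ 0 := fun hc => hqG (by rw [hc]; exact AddSubgroup.zero_mem G)
              have h2 : y ≠ 0 := fun hc => hyG' (by rw [hc]; exact AddSubgroup.zero_mem G)
              exact ⟨q, hinj _ _ h1 h2 hq'⟩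
  -- contradiction with complete reachability
  have hex : ∃ x : ZMod n, x ∉ G := by
    by_contra hall
    push_neg at hall
    exact hne ((AddSubgroup.eq_top_iff' G).mpr hall)
  obtain ⟨x0, hx0⟩ := hex
  obtain ⟨w, hw⟩ := hcr ((G : Set (ZMod n))ᶜ) ⟨x0, hx0⟩
  apply hmain w 0
  rw [hw]
  ext y
  simp only [Set.mem_compl_iff, SetLike.mem_coe, Set.mem_setOf_eq, add_zero]
end

section
/- A standardized DFA ⟨Z_n,{a,b}⟩ is completely reachable if and only if no proper subgroup of (Z_n,+) is invariant under the action of a. -/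
namespace CRAux

variable {n : ℕ}

variable {n : ℕ}

lemma wact_append (a : ZMod n → ZMod n) (w v : List Bool) (q : ZMod n) :
    wact a (w ++ v) q = wact a v (wact a w q) :=
  by simp [wact]

lemma wact_concat (a : ZMod n → ZMod n) (w : List Bool) (c : Bool) (q : ZMod n) :
    wact a (w ++ [c]) q = act a (wact a w q) c := by
  rw [wact_append]; rfl

lemma range_concat (a : ZMod n → ZMod n) (w : List Bool) (c : Bool) :
    Set.range (wact a (w ++ [c])) = (fun q => act a q c) '' Set.range (wact a w) := by
  have h : wact a (w ++ [c]) = (fun q => act a q c) ∘ wact a w :=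
    funext fun q => wact_concat a w c q
  rw [h, Set.range_comp]

/-- Reachability of a subset. -/
def Reach (a : ZMod n → ZMod n) (X : Set (ZMod n)) : Prop :=
  ∃ w : List Bool, Set.range (wact a w) = X

lemma reach_act (a : ZMod n → ZMod n) {X : Set (ZMod n)} (c : Bool) (h : Reach a X) :
    Reach a ((fun q => act a q c) '' X) := by
  obtain ⟨w, hw⟩ := h
  exact ⟨w ++ [c], by rw [range_concat, hw]⟩

lemma reach_a (a : ZMod n → ZMod n) {X : Set (ZMod n)} (h : Reach a X) :
    Reach a (a '' X) := by
  have := reach_act a false h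
  simpa [act] using this

lemma reach_add (a : ZMod n → ZMod n) [NeZero n] {X : Set (ZMod n)} (t : ZMod n)
    (h : Reach a X) : Reach a ((fun q => q + t) '' X) := by
  have key : ∀ k : ℕ, Reach a ((fun q => q + (k : ZMod n)) '' X) := by
    intro k
    induction k with
    | zero => simpa using h
    | succ m ih =>
      have h2 := reach_act a true ih
      rw [Set.image_image] at h2
      have : (fun q : ZMod n => act a (q + (m : ZMod n)) true)
          = fun q => q + ((m + 1 : ℕ) : ZMod n) := by
        funext q; simp [act]; ring_nf
      rwa [this] at h2
  have := key (t.val)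
  rwa [ZMod.natCast_val, ZMod.cast_id] at this

lemma reach_of_reach_add (a : ZMod n → ZMod n) [NeZero n] {X : Set (ZMod n)} (t : ZMod n)
    (h : Reach a ((fun q => q + t) '' X)) : Reach a X := by
  have h2 := reach_add a (-t) h
  rw [Set.image_image] at h2
  simpa using h2


lemma a_ne_zero {a : ZMod n → ZMod n} (hrange : Set.range a = {(0 : ZMod n)}ᶜ)
    (x : ZMod n) : a x ≠ 0 := by
  have : a x ∈ Set.range a := ⟨x, rfl⟩
  rw [hrange] at this
  simpa using this

lemma exists_pre {a : ZMod n → ZMod n} (hrange : Set.range a = {(0 : ZMod n)}ᶜ)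
    {y : ZMod n} (hy : y ≠ 0) : ∃ x, a x = y := by
  have : y ∈ Set.range a := by rw [hrange]; simpa using hy
  exact this

lemma collision (hn : 2 ≤ n) (a : ZMod n → ZMod n)
    (hrange : Set.range a = {(0 : ZMod n)}ᶜ) {r : ZMod n} (hr0 : r ≠ 0) (hra : a r = a 0)
    {x y : ZMod n} (hxy : x ≠ y) (h : a x = a y) :
    (x = 0 ∧ y = r) ∨ (x = r ∧ y = 0) := by
  haveI : NeZero n := ⟨by omega⟩
  classical
  by_contra hcon
  push_neg at hcon
  -- pick z ∈ {x,y} outside {0,r}, z' the other one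
  have hz : ∃ z z', (z ≠ 0 ∧ z ≠ r) ∧ z ≠ z' ∧ a z = a z' := by
    by_cases hx0 : x = 0
    · exact ⟨y, x, ⟨fun h0 => hxy (hx0.trans h0.symm), hcon.1 hx0⟩, fun h0 => hxy h0.symm, h.symm⟩
    · by_cases hxr : x = r
      · exact ⟨y, x, ⟨hcon.2 hxr, fun hyr => hxy (hxr.trans hyr.symm)⟩, fun h0 => hxy h0.symm, h.symm⟩
      · exact ⟨x, y, ⟨hx0, hxr⟩, hxy, h⟩
  obtain ⟨z, z', ⟨hz0, hzr⟩, hzz, hzz'⟩ := hz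
  have himg : (Finset.univ.image a) = Finset.univ.erase (0 : ZMod n) := by
    ext u
    constructor
    · intro hu
      obtain ⟨v, -, rfl⟩ := Finset.mem_image.mp hu
      exact Finset.mem_erase.mpr ⟨a_ne_zero hrange v, Finset.mem_univ _⟩
    · intro hu
      obtain ⟨v, hv⟩ := exists_pre hrange (Finset.mem_erase.mp hu).1
      exact Finset.mem_image.mpr ⟨v, Finset.mem_univ v, hv⟩
  have hcard1 : (Finset.univ.image a).card = n - 1 := by
    rw [himg, Finset.card_erase_of_mem (Finset.mem_univ _), Finset.card_univ, ZMod.card]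
  have h0mem : (0 : ZMod n) ∈ (Finset.univ.erase r).erase z :=
    Finset.mem_erase.mpr ⟨Ne.symm hz0, Finset.mem_erase.mpr ⟨Ne.symm hr0, Finset.mem_univ _⟩⟩
  have hsub : Finset.univ.image a ⊆ ((Finset.univ.erase r).erase z).image a := by
    intro u hu
    obtain ⟨v, -, rfl⟩ := Finset.mem_image.mp hu
    by_cases hvr : v = r
    · exact Finset.mem_image.mpr ⟨0, h0mem, by rw [hvr, hra]⟩
    · by_cases hvz : v = z
      · by_cases hz'r : z' = r
        · refine Finset.mem_image.mpr ⟨0, h0mem, ?_⟩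
          rw [hvz, hzz', hz'r, hra]
        · by_cases hz'z : z' = z
          · exact absurd hz'z.symm hzz
          · refine Finset.mem_image.mpr ⟨z', Finset.mem_erase.mpr ⟨hz'z, Finset.mem_erase.mpr ⟨hz'r, Finset.mem_univ _⟩⟩, ?_⟩
            rw [hvz, hzz']
      · exact Finset.mem_image.mpr ⟨v, Finset.mem_erase.mpr ⟨hvz, Finset.mem_erase.mpr ⟨hvr, Finset.mem_univ _⟩⟩, rfl⟩
  have hcard2 : (((Finset.univ.erase r).erase z).image a).card ≤ n - 2 := by
    calc (((Finset.univ.erase r).erase z).image a).card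
        ≤ ((Finset.univ.erase r).erase z).card := Finset.card_image_le
      _ = n - 2 := by
          rw [Finset.card_erase_of_mem
              (Finset.mem_erase.mpr ⟨hzr, Finset.mem_univ _⟩),
            Finset.card_erase_of_mem (Finset.mem_univ _), Finset.card_univ, ZMod.card]
          omega
  have := le_trans (le_of_eq hcard1.symm) (le_trans (Finset.card_le_card hsub) hcard2)
  omega

lemma r_mem (hn : 2 ≤ n) (a : ZMod n → ZMod n)
    (hrange : Set.range a = {(0 : ZMod n)}ᶜ) {r : ZMod n} (hr0 : r ≠ 0) (hra : a r = a 0)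
    {H : AddSubgroup (ZMod n)} (hinv : ∀ h ∈ H, a h ∈ H) : r ∈ H := by
  haveI : NeZero n := ⟨by omega⟩
  classical
  by_contra hr
  set Hf : Finset (ZMod n) := Finset.univ.filter (· ∈ H) with hHf
  have hmem : ∀ x, x ∈ Hf ↔ x ∈ H := by
    intro x; simp [hHf]
  have hinj : Set.InjOn a ↑Hf := by
    intro x hx y hy hxy2
    by_contra hne
    rcases collision hn a hrange hr0 hra hne hxy2 with ⟨-, h2⟩ | ⟨h1, -⟩
    · rw [h2] at hy; exact hr ((hmem r).mp (by exact_mod_cast hy))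
    · rw [h1] at hx; exact hr ((hmem r).mp (by exact_mod_cast hx))
  have hsub : Hf.image a ⊆ Hf.erase 0 := by
    intro u hu
    obtain ⟨v, hv, rfl⟩ := Finset.mem_image.mp hu
    exact Finset.mem_erase.mpr ⟨a_ne_zero hrange v, (hmem _).mpr (hinv v ((hmem v).mp hv))⟩
  have h1 : Hf.card = (Hf.image a).card := (Finset.card_image_of_injOn hinj).symm
  have h2 : (Hf.image a).card ≤ Hf.card - 1 := by
    calc (Hf.image a).card ≤ (Hf.erase 0).card := Finset.card_le_card hsub
      _ = Hf.card - 1 := Finset.card_erase_of_mem ((hmem 0).mpr H.zero_mem)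
  have h0 : 0 < Hf.card := Finset.card_pos.mpr ⟨0, (hmem 0).mpr H.zero_mem⟩
  omega

lemma notMem_a (hn : 2 ≤ n) (a : ZMod n → ZMod n)
    (hrange : Set.range a = {(0 : ZMod n)}ᶜ) {r : ZMod n} (hr0 : r ≠ 0) (hra : a r = a 0)
    {H : AddSubgroup (ZMod n)} (hinv : ∀ h ∈ H, a h ∈ H)
    {x : ZMod n} (hx : x ∉ H) : a x ∉ H := by
  haveI : NeZero n := ⟨by omega⟩
  classical
  intro hax
  have hrH : r ∈ H := r_mem hn a hrange hr0 hra hinv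
  set Hf : Finset (ZMod n) := Finset.univ.filter (· ∈ H) with hHf
  have hmem : ∀ y, y ∈ Hf ↔ y ∈ H := by
    intro y; simp [hHf]
  set s : Finset (ZMod n) := (insert x Hf).erase r with hs
  have hinj : Set.InjOn a ↑s := by
    intro u hu v hv huv
    by_contra hne
    rcases collision hn a hrange hr0 hra hne huv with ⟨-, h2⟩ | ⟨h1, -⟩
    · exact (Finset.mem_erase.mp (by exact_mod_cast hv)).1 h2
    · exact (Finset.mem_erase.mp (by exact_mod_cast hu)).1 h1
  have hsub : s.image a ⊆ Hf.erase 0 := by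
    intro u hu
    obtain ⟨v, hv, rfl⟩ := Finset.mem_image.mp hu
    refine Finset.mem_erase.mpr ⟨a_ne_zero hrange v, (hmem _).mpr ?_⟩
    rcases Finset.mem_insert.mp (Finset.mem_of_mem_erase hv) with rfl | hvH
    · exact hax
    · exact hinv v ((hmem v).mp hvH)
  have hxHf : x ∉ Hf := fun h => hx ((hmem x).mp h)
  have hrs : r ∈ insert x Hf := Finset.mem_insert.mpr (Or.inr ((hmem r).mpr hrH))
  have hcards : s.card = Hf.card := by
    rw [hs, Finset.card_erase_of_mem hrs, Finset.card_insert_of_notMem hxHf]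
    omega
  have h1 : s.card = (s.image a).card := (Finset.card_image_of_injOn hinj).symm
  have h2 : (s.image a).card ≤ Hf.card - 1 := by
    calc (s.image a).card ≤ (Hf.erase 0).card := Finset.card_le_card hsub
      _ = Hf.card - 1 := Finset.card_erase_of_mem ((hmem 0).mpr H.zero_mem)
  have h0 : 0 < Hf.card := Finset.card_pos.mpr ⟨0, (hmem 0).mpr H.zero_mem⟩
  omega

lemma range_ne_coset_compl (hn : 2 ≤ n) (a : ZMod n → ZMod n)
    (hrange : Set.range a = {(0 : ZMod n)}ᶜ) {r : ZMod n} (hr0 : r ≠ 0) (hra : a r = a 0)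
    {H : AddSubgroup (ZMod n)} (hinv : ∀ h ∈ H, a h ∈ H) :
    ∀ (w : List Bool) (t : ZMod n), Set.range (wact a w) ≠ {x : ZMod n | x - t ∈ H}ᶜ := by
  haveI : NeZero n := ⟨by omega⟩
  have hrH : r ∈ H := r_mem hn a hrange hr0 hra hinv
  intro w
  induction w using List.reverseRecOn with
  | nil =>
    intro t hcontra
    have h1 : (t : ZMod n) ∈ Set.range (wact a []) := ⟨t, rfl⟩
    rw [hcontra] at h1
    exact h1 (by simp [H.zero_mem])
  | append_singleton w c ih =>
    intro t hcontra
    rw [range_concat] at hcontra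
    cases c with
    | true =>
      apply ih (t - 1)
      have hact : (fun q : ZMod n => act a q true) = fun q => q + 1 := by
        funext q; simp [act]
      rw [hact] at hcontra
      ext z
      have hz : z ∈ Set.range (wact a w) ↔ z + 1 ∈ (fun q : ZMod n => q + 1) '' Set.range (wact a w) := by
        constructor
        · exact fun h => ⟨z, h, rfl⟩
        · rintro ⟨u, hu, he⟩
          have : u = z := by
            have := add_right_cancel he
            exact this
          rwa [← this]
      rw [hcontra] at hz
      simp only [Set.mem_compl_iff, Set.mem_setOf_eq] at hz ⊢
      rw [hz, show z + 1 - t = z - (t - 1) from by ring]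
    | false =>
      have hact : (fun q : ZMod n => act a q false) = a := by
        funext q; simp [act]
      rw [hact] at hcontra
      have h0 : (0 : ZMod n) ∉ a '' Set.range (wact a w) := by
        rintro ⟨u, -, hu⟩
        exact a_ne_zero hrange u hu
      rw [hcontra] at h0
      have ht : t ∈ H := by
        have h1 : (0 : ZMod n) ∈ {x : ZMod n | x - t ∈ H} := not_not.mp (by simpa using h0)
        have h2 : (0 : ZMod n) - t ∈ H := h1
        rw [zero_sub] at h2
        simpa using H.neg_mem h2
      have hCt : {x : ZMod n | x - t ∈ H} = (H : Set (ZMod n)) := by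
        ext u
        simp only [Set.mem_setOf_eq, SetLike.mem_coe]
        constructor
        · intro hu; simpa using H.add_mem hu ht
        · intro hu; exact H.sub_mem hu ht
      rw [hCt] at hcontra
      have hXH : ∀ u ∈ Set.range (wact a w), u ∉ H := by
        intro u hu hu'
        have h1 : a u ∈ ((H : Set (ZMod n)))ᶜ := by
          rw [← hcontra]; exact ⟨u, hu, rfl⟩
        exact h1 (hinv u hu')
      apply ih 0
      ext z
      simp only [Set.mem_compl_iff, Set.mem_setOf_eq, sub_zero, SetLike.mem_coe]
      constructor
      · intro hz; exact hXH z hz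
      · intro hz
        have haz : a z ∈ ((H : Set (ZMod n)))ᶜ := notMem_a hn a hrange hr0 hra hinv hz
        rw [← hcontra] at haz
        obtain ⟨u, hu, hau⟩ := haz
        by_cases huz : u = z
        · rwa [← huz]
        · rcases collision hn a hrange hr0 hra huz hau with ⟨h1, -⟩ | ⟨h1, -⟩
          · exact absurd H.zero_mem (h1 ▸ hXH u hu)
          · exact absurd hrH (h1 ▸ hXH u hu)

lemma preimage_image [NeZero n] (a : ZMod n → ZMod n)
    (hrange : Set.range a = {(0 : ZMod n)}ᶜ)
    (S : Finset (ZMod n)) (h0 : (0 : ZMod n) ∉ S) [DecidablePred (fun z => a z ∈ S)] :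
    a '' ↑(Finset.univ.filter (fun z => a z ∈ S)) = (S : Set (ZMod n)) := by
  ext y
  constructor
  · rintro ⟨z, hz, rfl⟩
    have hz' : z ∈ Finset.univ.filter (fun z => a z ∈ S) := by exact_mod_cast hz
    exact_mod_cast (Finset.mem_filter.mp hz').2
  · intro hy
    have hy' : y ∈ S := by exact_mod_cast hy
    have hyne : y ≠ 0 := fun h => h0 (h ▸ hy')
    obtain ⟨x, hx⟩ := exists_pre hrange hyne
    refine ⟨x, ?_, hx⟩
    have : x ∈ Finset.univ.filter (fun z => a z ∈ S) :=
      Finset.mem_filter.mpr ⟨Finset.mem_univ _, by rw [hx]; exact hy'⟩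
    exact_mod_cast this

lemma preimage_card_succ [NeZero n] (hn : 2 ≤ n) (a : ZMod n → ZMod n)
    (hrange : Set.range a = {(0 : ZMod n)}ᶜ) {r : ZMod n} (hr0 : r ≠ 0) (hra : a r = a 0)
    (S : Finset (ZMod n)) (h0 : (0 : ZMod n) ∉ S) (hd : a 0 ∈ S)
    [DecidablePred (fun z => a z ∈ S)] :
    (Finset.univ.filter (fun z => a z ∈ S)).card = S.card + 1 := by
  set T := Finset.univ.filter (fun z => a z ∈ S) with hT
  have hrT : r ∈ T := Finset.mem_filter.mpr ⟨Finset.mem_univ _, by rw [hra]; exact hd⟩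
  have h0T : (0 : ZMod n) ∈ T := Finset.mem_filter.mpr ⟨Finset.mem_univ _, hd⟩
  have hbij : (T.erase r).card = S.card := by
    apply Finset.card_bij (fun z _ => a z)
    · intro z hz
      exact (Finset.mem_filter.mp (Finset.mem_of_mem_erase hz)).2
    · intro z₁ h₁ z₂ h₂ he
      by_contra hne
      rcases collision hn a hrange hr0 hra hne he with ⟨-, h2⟩ | ⟨h1, -⟩
      · exact (Finset.mem_erase.mp h₂).1 h2
      · exact (Finset.mem_erase.mp h₁).1 h1
    · intro y hy
      have hyne : y ≠ 0 := fun h => h0 (h ▸ hy)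
      obtain ⟨x, hx⟩ := exists_pre hrange hyne
      by_cases hxr : x = r
      · exact ⟨0, Finset.mem_erase.mpr ⟨Ne.symm hr0, h0T⟩, by rw [← hra, ← hxr, hx]⟩
      · exact ⟨x, Finset.mem_erase.mpr ⟨hxr,
          Finset.mem_filter.mpr ⟨Finset.mem_univ _, by rw [hx]; exact hy⟩⟩, hx⟩
  have := Finset.card_erase_add_one hrT
  omega

lemma preimage_card_eq [NeZero n] (hn : 2 ≤ n) (a : ZMod n → ZMod n)
    (hrange : Set.range a = {(0 : ZMod n)}ᶜ) {r : ZMod n} (hr0 : r ≠ 0) (hra : a r = a 0)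
    (S : Finset (ZMod n)) (h0 : (0 : ZMod n) ∉ S) (hd : a 0 ∉ S)
    [DecidablePred (fun z => a z ∈ S)] :
    (Finset.univ.filter (fun z => a z ∈ S)).card = S.card := by
  set T := Finset.univ.filter (fun z => a z ∈ S) with hT
  have h0T : (0 : ZMod n) ∉ T := fun h => hd (Finset.mem_filter.mp h).2
  have hrT : r ∉ T := fun h => hd (by rw [← hra]; exact (Finset.mem_filter.mp h).2)
  apply Finset.card_bij (fun z _ => a z)
  · intro z hz
    exact (Finset.mem_filter.mp hz).2
  · intro z₁ h₁ z₂ h₂ he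
    by_contra hne
    rcases collision hn a hrange hr0 hra hne he with ⟨h1, -⟩ | ⟨h1, -⟩
    · exact h0T (h1 ▸ h₁)
    · exact hrT (h1 ▸ h₁)
  · intro y hy
    have hyne : y ≠ 0 := fun h => h0 (h ▸ hy)
    obtain ⟨x, hx⟩ := exists_pre hrange hyne
    exact ⟨x, Finset.mem_filter.mpr ⟨Finset.mem_univ _, by rw [hx]; exact hy⟩, hx⟩


lemma sufficiency (hn : 2 ≤ n) (a : ZMod n → ZMod n) (hstd : Standardized a)
    (hH : ∀ H : AddSubgroup (ZMod n), (∀ h ∈ H, a h ∈ H) → H = ⊤) :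
    CompletelyReachable a := by
  haveI : NeZero n := ⟨by omega⟩
  classical
  obtain ⟨hrange, r, hr0, hra⟩ := hstd
  by_contra hcr
  simp only [CompletelyReachable] at hcr
  push_neg at hcr
  obtain ⟨S₀, hS₀ne, hS₀⟩ := hcr
  set UF : Finset (ZMod n) → Prop :=
    fun T => T.Nonempty ∧ ∀ w : List Bool, Set.range (wact a w) ≠ ↑T with hUFdef
  have hUF0 : UF (Set.toFinite S₀).toFinset := by
    constructor
    · rw [Set.Finite.toFinset_nonempty]
      exact hS₀ne
    · intro w hw
      rw [Set.Finite.coe_toFinset] at hw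
      exact hS₀ w hw
  obtain ⟨Smax, hSmaxF, hmax'⟩ :=
    Finset.exists_max_image (Finset.univ.filter UF) Finset.card
      ⟨(Set.toFinite S₀).toFinset, Finset.mem_filter.mpr ⟨Finset.mem_univ _, hUF0⟩⟩
  set s := Smax.card with hsdef
  have hUFmax : UF Smax := (Finset.mem_filter.mp hSmaxF).2
  have hmax : ∀ T, UF T → T.card ≤ s := fun T hT =>
    hmax' T (Finset.mem_filter.mpr ⟨Finset.mem_univ _, hT⟩)
  have hs1 : 1 ≤ s := Finset.card_pos.mpr hUFmax.1
  have hsn : s < n := by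
    by_contra hge
    push_neg at hge
    have h1 : s ≤ n := by
      have := Finset.card_le_univ Smax
      rwa [ZMod.card] at this
    have hcard : Smax.card = Fintype.card (ZMod n) := by rw [ZMod.card]; omega
    have huniv : Smax = Finset.univ := Finset.eq_univ_of_card _ hcard
    apply hUFmax.2 []
    rw [huniv, Finset.coe_univ]
    show Set.range (fun q : ZMod n => q) = _
    rw [Set.range_id']
  set Q : Finset (ZMod n) → Prop := fun C => UF Cᶜ ∧ Cᶜ.card = s with hQdef
  have hact : (fun q : ZMod n => act a q false) = a := by funext q; simp [act]
  -- shift closure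
  have hmemim : ∀ (t : ZMod n) (D : Finset (ZMod n)) (z : ZMod n),
      z ∈ D.image (· + t) ↔ z - t ∈ D := by
    intro t D z
    constructor
    · intro h
      obtain ⟨u, hu, rfl⟩ := Finset.mem_image.mp h
      simpa using hu
    · intro h
      exact Finset.mem_image.mpr ⟨z - t, h, by ring⟩
  have hQ_shift : ∀ (C : Finset (ZMod n)) (t : ZMod n), Q C → Q (C.image (· + t)) := by
    intro C t hC
    have hcompl : (C.image (· + t))ᶜ = Cᶜ.image (· + t) := by
      ext z
      rw [Finset.mem_compl, hmemim, hmemim, Finset.mem_compl]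
    refine ⟨?_, ?_⟩
    · rw [hcompl]
      refine ⟨hC.1.1.image _, ?_⟩
      intro w hw
      rw [Finset.coe_image] at hw
      have hreach : CRAux.Reach a ((fun q => q + t) '' ↑(Cᶜ)) := ⟨w, hw⟩
      obtain ⟨w', hw'⟩ := reach_of_reach_add a t hreach
      exact hC.1.2 w' hw'
    · rw [hcompl, Finset.card_image_of_injective _ (add_left_injective t)]
      exact hC.2
  -- preimage closure
  have hQ_pre : ∀ C : Finset (ZMod n), Q C → (0 : ZMod n) ∈ C →
      a 0 ∈ C ∧ Q (Finset.univ.filter (fun z => a z ∈ C)) := by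
    intro C hC h0C
    have h0S : (0 : ZMod n) ∉ Cᶜ := by simpa using h0C
    have had : a 0 ∈ C := by
      by_contra had
      have hdS : a 0 ∈ Cᶜ := Finset.mem_compl.mpr had
      have hcardT := preimage_card_succ hn a hrange hr0 hra (Cᶜ) h0S hdS
      have himgT := preimage_image a hrange (Cᶜ) h0S
      have hTreach : CRAux.Reach a ↑(Finset.univ.filter (fun z => a z ∈ Cᶜ)) := by
        by_contra hTun
        have hUFT : UF (Finset.univ.filter (fun z => a z ∈ Cᶜ)) :=
          ⟨Finset.card_pos.mp (by rw [hcardT]; omega), fun w hw => hTun ⟨w, hw⟩⟩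
        have h2 := hmax _ hUFT
        have h3 := hC.2
        omega
      obtain ⟨w, hw⟩ := hTreach
      apply hC.1.2 (w ++ [false])
      rw [range_concat, hact, hw, himgT]
    refine ⟨had, ?_, ?_⟩
    · have hdS : a 0 ∉ Cᶜ := by simpa using had
      have hcardT := preimage_card_eq hn a hrange hr0 hra (Cᶜ) h0S hdS
      have himgT := preimage_image a hrange (Cᶜ) h0S
      have hcomp : (Finset.univ.filter (fun z => a z ∈ C))ᶜ
          = Finset.univ.filter (fun z => a z ∈ Cᶜ) := by
        ext z
        simp [Finset.mem_compl]
      rw [hcomp]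
      refine ⟨Finset.card_pos.mp (by rw [hcardT, hC.2]; omega), ?_⟩
      intro w hw
      apply hC.1.2 (w ++ [false])
      rw [range_concat, hact, hw, himgT]
    · have hdS : a 0 ∉ Cᶜ := by simpa using had
      have hcardT := preimage_card_eq hn a hrange hr0 hra (Cᶜ) h0S hdS
      have hcomp : (Finset.univ.filter (fun z => a z ∈ C))ᶜ
          = Finset.univ.filter (fun z => a z ∈ Cᶜ) := by
        ext z
        simp [Finset.mem_compl]
      rw [hcomp, hcardT, hC.2]
  -- the stabilizer subgroup
  set Hset : Set (ZMod n) := {t | ∀ C : Finset (ZMod n), Q C → C.image (· + t) = C}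
    with hHsetdef
  have hzero : (0 : ZMod n) ∈ Hset := by
    intro C hC
    have h1 : C.image (· + (0 : ZMod n)) = C.image id :=
      Finset.image_congr (fun x _ => by simp)
    rw [h1, Finset.image_id]
  have haddm : ∀ {x y : ZMod n}, x ∈ Hset → y ∈ Hset → x + y ∈ Hset := by
    intro x y hx hy C hC
    have h1 : C.image (· + (x + y)) = (C.image (· + x)).image (· + y) := by
      rw [Finset.image_image]
      exact Finset.image_congr (fun u _ => by simp [Function.comp]; ring)
    rw [h1, hx C hC, hy C hC]
  have hnegm : ∀ {x : ZMod n}, x ∈ Hset → -x ∈ Hset := by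
    intro x hx C hC
    conv_lhs => rw [← hx C hC]
    rw [Finset.image_image]
    have h1 : ((· + (-x)) ∘ (· + x)) = fun z : ZMod n => z := by
      funext z; simp
    rw [h1, Finset.image_id']
  set Hc : AddSubgroup (ZMod n) :=
    { carrier := Hset, zero_mem' := hzero, add_mem' := haddm, neg_mem' := hnegm }
    with hHcdef
  have hmemHc : ∀ t : ZMod n, t ∈ Hc ↔ t ∈ Hset := fun t => Iff.rfl
  have hstab : ∀ t : ZMod n, t ∈ Hset →
      ∀ C, Q C → (0 : ZMod n) ∈ C → t ∈ C := by
    intro t ht C hC h0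
    have h1 := ht C hC
    rw [← h1]
    exact Finset.mem_image.mpr ⟨0, h0, by simp⟩
  have hainv : ∀ h ∈ Hc, a h ∈ Hc := by
    intro t ht
    rw [hmemHc] at ht ⊢
    intro C hC
    have hsubim : C.image (· + a t) ⊆ C := by
      intro z hz
      obtain ⟨x, hx, he2⟩ := Finset.mem_image.mp hz
      have hC1 : Q (C.image (· + (-x))) := hQ_shift C (-x) hC
      have h01 : (0 : ZMod n) ∈ C.image (· + (-x)) :=
        Finset.mem_image.mpr ⟨x, hx, by ring⟩
      obtain ⟨had1, hC2⟩ := hQ_pre _ hC1 h01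
      have h02 : (0 : ZMod n) ∈ Finset.univ.filter (fun z => a z ∈ C.image (· + (-x))) :=
        Finset.mem_filter.mpr ⟨Finset.mem_univ _, had1⟩
      have htmem : t ∈ Finset.univ.filter (fun z => a z ∈ C.image (· + (-x))) :=
        hstab t ht _ hC2 h02
      have hat : a t ∈ C.image (· + (-x)) := (Finset.mem_filter.mp htmem).2
      obtain ⟨u, hu, he⟩ := Finset.mem_image.mp hat
      have hz2 : z = u := by
        rw [← he2]
        show x + a t = u
        rw [← he]
        show x + (u + -x) = u
        ring
      rw [hz2]
      exact hu
    exact Finset.eq_of_subset_of_card_le hsubim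
      (le_of_eq (Finset.card_image_of_injective _ (add_left_injective _)).symm)
  have htop : Hc = ⊤ := hH Hc hainv
  have hQmax : Q (Smaxᶜ) := by
    constructor
    · rw [compl_compl]; exact hUFmax
    · rw [compl_compl]
  obtain ⟨y, hy⟩ := hUFmax.1
  have hCne : (Smaxᶜ).Nonempty := by
    rw [← Finset.card_pos, Finset.card_compl, ZMod.card]
    omega
  obtain ⟨x, hx⟩ := hCne
  have hytx : (y - x) ∈ Hset := by
    have h1 : (y - x) ∈ Hc := by rw [htop]; exact AddSubgroup.mem_top _
    rwa [hmemHc] at h1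
  have himg := hytx (Smaxᶜ) hQmax
  have hyC : y ∈ Smaxᶜ := by
    rw [← himg]
    exact Finset.mem_image.mpr ⟨x, hx, by ring⟩
  exact Finset.mem_compl.mp hyC hy

end CRAux

theorem completely_reachable_iff_no_proper_invariant {n : ℕ} (hn : 2 ≤ n)
    (a : ZMod n → ZMod n) (hstd : Standardized a) :
    CompletelyReachable a ↔
      ∀ H : AddSubgroup (ZMod n), (∀ h ∈ H, a h ∈ H) → H = ⊤ := by
  constructor
  · intro hCR H hinv
    by_contra hne
    obtain ⟨x, hx⟩ : ∃ x, x ∉ H := by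
      by_contra h
      push_neg at h
      exact hne ((AddSubgroup.eq_top_iff' H).mpr h)
    obtain ⟨hrange, r, hr0, hra⟩ := hstd
    obtain ⟨w, hw⟩ := hCR ((H : Set (ZMod n))ᶜ) ⟨x, hx⟩
    apply CRAux.range_ne_coset_compl hn a hrange hr0 hra hinv w 0
    rw [hw]
    congr 1
    ext z
    simp
  · exact CRAux.sufficiency hn a hstd
end
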